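/- arXiv:1309.1495 — 2 statements merged into one kernel-verified Lean document; each statement's English description precedes it below -/
import Mathlib

section
/- Let q be an odd positive integer with prime factorization q = p₁^{α₁}⋯p_k^{α_k}, p₁ < ⋯ < p_k, and let d > 2. There is an absolute constant C such that for any E ⊆ (Z/qZ)^d with |E| ≥ C τ(q) q^d p₁^{−(d−2)/2}, the distance set Δ(E) = {Σᵢ(xᵢ−yᵢ)² : x, y ∈ E} equals all of Z/qZ. -/
/-!
Let `ψ` be a primitive additive character of `ℤ/qℤ` and `S(s) = ∑_{x,y ∈ E} ψ(s‖x - y‖)`.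
Orthogonality gives `q · #{(x, y) ∈ E² : ‖x - y‖ = t} = ∑_s ψ(-st) S(s)`, whose `s = 0` term is
`|E|²`. For `s ≠ 0`, Cauchy–Schwarz over `x ∈ E`, extending the `x`-sum to all of `(ℤ/qℤ)^d` and
expanding the square leaves sums of `ψ` of a linear form in `x` with coefficient `2s(y' - y)`;
as `2` is a unit for odd `q`, these survive only when `s(y - y') = 0`. This gives
`|S(s)|² ≤ |E|² q^d g^d` with `g = gcd(q, s) ≤ q / p₁`, hence `|S(s)| ≤ |E| g q^{d-1} p₁^{-(d-2)/2}`,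
and since `∑_s gcd(q, s) ≤ τ(q) q` the error terms total at most `|E| τ(q) q^d p₁^{-(d-2)/2}`;
so `C = 2` works.
-/

open Finset

theorem Nat.sum_range_gcd_le (n : ℕ) : ∑ k ∈ range n, n.gcd k ≤ n.divisors.card * n := by
  rcases n.eq_zero_or_pos with rfl | hn
  · simp
  rw [← sum_fiberwise_of_maps_to (t := n.divisors) (g := n.gcd)
    fun k _ => mem_divisors.2 ⟨gcd_dvd_left _ _, hn.ne'⟩]
  calc ∑ d ∈ n.divisors, ∑ k ∈ range n with n.gcd k = d, n.gcd k
      = ∑ d ∈ n.divisors, d * (n / d).totient := sum_congr rfl fun d hd => by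
        rw [sum_congr rfl fun k hk => (mem_filter.1 hk).2, sum_const, smul_eq_mul,
          totient_div_of_dvd (dvd_of_mem_divisors hd), mul_comm]
    _ ≤ ∑ _d ∈ n.divisors, n :=
        sum_le_sum fun d _ => (Nat.mul_le_mul_left d (totient_le _)).trans (Nat.mul_div_le n d)
    _ = n.divisors.card * n := by rw [sum_const, smul_eq_mul]

theorem Nat.mul_minFac_le_of_dvd {m n : ℕ} (h : m ∣ n) (hmn : m < n) : m * n.minFac ≤ n := by
  obtain ⟨k, rfl⟩ := h
  have hk : 2 ≤ k := by
    by_contra! hk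
    interval_cases k <;> simp at hmn
  exact Nat.mul_le_mul_left m (Nat.minFac_le_of_dvd hk (dvd_mul_left k m))

namespace ZMod

theorem isUnit_two_of_odd {q : ℕ} (hq : Odd q) : IsUnit (2 : ZMod q) := by
  exact_mod_cast (isUnit_iff_coprime 2 q).2 (Nat.coprime_two_left.2 hq)

variable {q : ℕ} [NeZero q]

theorem sum_gcd_val_le : ∑ s : ZMod q, q.gcd s.val ≤ q.divisors.card * q := by
  refine le_of_eq_of_le ?_ (Nat.sum_range_gcd_le q)
  refine sum_nbij' val (fun k => (k : ZMod q)) (fun s _ => mem_range.2 (val_lt s))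
    (fun _ _ => mem_univ _) (fun s _ => natCast_zmod_val s)
    (fun k hk => val_cast_of_lt (mem_range.1 hk)) fun _ _ => rfl

theorem gcd_val_mul_minFac_le {s : ZMod q} (hs : s ≠ 0) : q.gcd s.val * q.minFac ≤ q :=
  Nat.mul_minFac_le_of_dvd (Nat.gcd_dvd_left _ _) <|
    (Nat.gcd_le_right _ (Nat.pos_of_ne_zero ((val_ne_zero s).2 hs))).trans_lt (val_lt s)

theorem card_filter_mul_eq_zero_le_gcd (s : ZMod q) :
    #{z : ZMod q | s * z = 0} ≤ q.gcd s.val := by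
  set g := q.gcd s.val
  have hg : 0 < g := Nat.gcd_pos_of_pos_left _ (NeZero.pos q)
  have hcop : (q / g).Coprime (s.val / g) := Nat.coprime_div_gcd_div_gcd hg
  have hq : q = g * (q / g) := (Nat.mul_div_cancel' (Nat.gcd_dvd_left _ _)).symm
  have hs : s.val = g * (s.val / g) := (Nat.mul_div_cancel' (Nat.gcd_dvd_right _ _)).symm
  calc #{z : ZMod q | s * z = 0}
      ≤ #((range g).image fun k => ((q / g * k : ℕ) : ZMod q)) := card_le_card fun z hz => by
        have hdvd : q ∣ s.val * z.val := by
          rw [← natCast_eq_zero_iff]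
          simpa using (mem_filter.1 hz).2
        replace hdvd : g * (q / g) ∣ g * (s.val / g * z.val) := by
          rwa [← mul_assoc, ← hs, ← hq]
        obtain ⟨k, hk⟩ := hcop.dvd_of_dvd_mul_left (Nat.dvd_of_mul_dvd_mul_left hg hdvd)
        refine mem_image.2 ⟨k, mem_range.2 ?_, by rw [← hk, natCast_zmod_val]⟩
        refine Nat.lt_of_mul_lt_mul_left (a := q / g) ?_
        rw [← hk, Nat.div_mul_cancel (Nat.gcd_dvd_left _ _)]
        exact val_lt z
    _ ≤ g := card_image_le.trans (card_range g).le

end ZMod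

theorem AddChar.map_sum_eq_prod {A M : Type*} [AddCommMonoid A] [CommMonoid M]
    (ψ : AddChar A M) {κ : Type*} (s : Finset κ) (a : κ → A) :
    ψ (∑ i ∈ s, a i) = ∏ i ∈ s, ψ (a i) := by
  induction s using Finset.cons_induction with
  | empty => simp
  | cons i s _ ih => rw [sum_cons, prod_cons, AddChar.map_add_eq_mul, ih]

namespace DistanceSet

variable {R : Type*} [CommRing R] {ι : Type*} [Fintype ι]

noncomputable def distanceSum (ψ : AddChar R ℂ) (E : Finset (ι → R)) (s : R) : ℂ :=
  ∑ x ∈ E, ∑ y ∈ E, ψ (s * ∑ i, (x i - y i) ^ 2)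

theorem distanceSum_zero (ψ : AddChar R ℂ) (E : Finset (ι → R)) :
    distanceSum ψ E 0 = (#E : ℂ) ^ 2 := by
  simp [distanceSum, sq]

variable [Fintype R] [DecidableEq R] {ψ : AddChar R ℂ}

theorem card_mul_card_filter_eq_sum (hψ : ψ.IsPrimitive) (E : Finset (ι → R)) (t : R) :
    (Fintype.card R : ℂ) * #{p ∈ E ×ˢ E | ∑ i, (p.1 i - p.2 i) ^ 2 = t} =
      ∑ s, ψ (-(s * t)) * distanceSum ψ E s := by
  have hterm : ∀ s, ψ (-(s * t)) * distanceSum ψ E s =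
      ∑ p ∈ E ×ˢ E, ψ (s * (∑ i, (p.1 i - p.2 i) ^ 2 - t)) := fun s => by
    rw [distanceSum, sum_product, mul_sum]
    refine sum_congr rfl fun x _ => ?_
    rw [mul_sum]
    refine sum_congr rfl fun y _ => ?_
    rw [← AddChar.map_add_eq_mul]
    ring_nf
  simp_rw [hterm]
  rw [sum_comm]
  simp_rw [AddChar.sum_mulShift _ hψ, sub_eq_zero]
  push_cast
  rw [sum_ite, sum_const_zero, add_zero, sum_const, nsmul_eq_mul, mul_comm]

theorem card_sq_sub_sum_norm_le (hψ : ψ.IsPrimitive) (E : Finset (ι → R)) (t : R) :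
    (#E : ℝ) ^ 2 - ∑ s ∈ univ.erase 0, ‖distanceSum ψ E s‖ ≤
      Fintype.card R * #{p ∈ E ×ˢ E | ∑ i, (p.1 i - p.2 i) ^ 2 = t} := by
  have hsplit := add_sum_erase univ (fun s => ψ (-(s * t)) * distanceSum ψ E s) (mem_univ 0)
  simp only [zero_mul, neg_zero, AddChar.map_zero_eq_one, one_mul, distanceSum_zero] at hsplit
  have hnorm : ‖∑ s ∈ univ.erase 0, ψ (-(s * t)) * distanceSum ψ E s‖ ≤
      ∑ s ∈ univ.erase 0, ‖distanceSum ψ E s‖ := by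
    refine (norm_sum_le _ _).trans (sum_le_sum fun s _ => ?_)
    rw [norm_mul, AddChar.norm_apply, one_mul]
  have := norm_sub_norm_le ((#E : ℂ) ^ 2) (-∑ s ∈ univ.erase 0, ψ (-(s * t)) * distanceSum ψ E s)
  rw [sub_neg_eq_add, hsplit, ← card_mul_card_filter_eq_sum hψ, norm_neg, norm_mul] at this
  simp only [norm_pow, Complex.norm_natCast] at this
  linarith

section Bound

variable [DecidableEq ι]

theorem sum_apply_dotProduct (hψ : ψ.IsPrimitive) (c : ι → R) :
    ∑ x : ι → R, ψ (c ⬝ᵥ x) = if c = 0 then (Fintype.card R : ℂ) ^ Fintype.card ι else 0 := by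
  simp_rw [dotProduct, AddChar.map_sum_eq_prod]
  rw [← Fintype.prod_sum (fun i r => ψ (c i * r))]
  simp_rw [mul_comm (c _), AddChar.sum_mulShift _ hψ]
  push_cast
  simp_rw [prod_ite_zero, prod_const, card_univ, mem_univ, true_imp_iff, funext_iff]
  simp

theorem norm_sum_apply_sub (hψ : ψ.IsPrimitive) (h2 : IsUnit (2 : R)) (s : R) (y y' : ι → R) :
    ‖∑ x : ι → R, ψ (s * ∑ i, (x i - y i) ^ 2 - s * ∑ i, (x i - y' i) ^ 2)‖ =
      if s • (y - y') = 0 then (Fintype.card R : ℝ) ^ Fintype.card ι else 0 := by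
  -- the terms quadratic in `x` cancel
  have expand : ∀ x : ι → R, s * ∑ i, (x i - y i) ^ 2 - s * ∑ i, (x i - y' i) ^ 2 =
      ((-2 : R) • s • (y - y')) ⬝ᵥ x + s * ∑ i, (y i ^ 2 - y' i ^ 2) := by
    intro x
    simp only [dotProduct, Pi.smul_apply, Pi.sub_apply, smul_eq_mul, mul_sum,
      ← sum_sub_distrib, ← sum_add_distrib]
    exact sum_congr rfl fun i _ => by ring
  simp_rw [expand, AddChar.map_add_eq_mul, ← sum_mul, norm_mul, AddChar.norm_apply, mul_one,
    sum_apply_dotProduct hψ, h2.neg.smul_eq_zero]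
  split_ifs <;> simp

theorem sum_norm_sq_le (hψ : ψ.IsPrimitive) (h2 : IsUnit (2 : R)) (E : Finset (ι → R)) (s : R) :
    ∑ x : ι → R, ‖∑ y ∈ E, ψ (s * ∑ i, (x i - y i) ^ 2)‖ ^ 2 ≤
      (Fintype.card R : ℝ) ^ Fintype.card ι * #{p ∈ E ×ˢ E | s • (p.1 - p.2) = 0} := by
  calc ∑ x : ι → R, ‖∑ y ∈ E, ψ (s * ∑ i, (x i - y i) ^ 2)‖ ^ 2
      = ‖∑ x : ι → R, (∑ y ∈ E, ψ (s * ∑ i, (x i - y i) ^ 2)) *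
          starRingEnd ℂ (∑ y ∈ E, ψ (s * ∑ i, (x i - y i) ^ 2))‖ := by
        simp_rw [Complex.mul_conj']
        norm_cast
        rw [Real.norm_of_nonneg (by positivity)]
    _ = ‖∑ p ∈ E ×ˢ E, ∑ x : ι → R,
          ψ (s * ∑ i, (x i - p.1 i) ^ 2 - s * ∑ i, (x i - p.2 i) ^ 2)‖ := by
        rw [sum_comm]
        congr 1
        refine sum_congr rfl fun x _ => ?_
        simp_rw [map_sum, ← AddChar.map_neg_eq_conj, sum_mul_sum, ← AddChar.map_add_eq_mul,
          ← sub_eq_add_neg, sum_product]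
    _ ≤ ∑ p ∈ E ×ˢ E, ‖∑ x : ι → R,
          ψ (s * ∑ i, (x i - p.1 i) ^ 2 - s * ∑ i, (x i - p.2 i) ^ 2)‖ := norm_sum_le _ _
    _ = (Fintype.card R : ℝ) ^ Fintype.card ι * #{p ∈ E ×ˢ E | s • (p.1 - p.2) = 0} := by
        simp_rw [norm_sum_apply_sub hψ h2]
        rw [sum_ite, sum_const_zero, add_zero, sum_const, nsmul_eq_mul, mul_comm]

theorem card_filter_smul_sub_eq_zero_le (E : Finset (ι → R)) (s : R) :
    #{p ∈ E ×ˢ E | s • (p.1 - p.2) = 0} ≤ #E * #{z : R | s * z = 0} ^ Fintype.card ι := by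
  have hpi : #(Fintype.piFinset fun _ : ι => ({z : R | s * z = 0} : Finset R)) =
      #{z : R | s * z = 0} ^ Fintype.card ι := by
    simp [Fintype.card_piFinset]
  rw [← hpi, ← card_product]
  refine card_le_card_of_injOn (fun p => (p.1, p.1 - p.2)) (fun p hp => ?_) ?_
  · simp only [coe_filter, mem_product] at hp
    simp only [coe_product, Set.mem_prod, mem_coe, hp.1.1, Fintype.mem_piFinset, mem_filter,
      mem_univ, true_and]
    exact fun i => congrFun hp.2 i
  · intro p _ p' _ h
    obtain ⟨h1, h2⟩ := Prod.mk.inj h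
    rw [h1] at h2
    exact Prod.ext h1 (sub_right_injective h2)

theorem norm_distanceSum_sq_le (hψ : ψ.IsPrimitive) (h2 : IsUnit (2 : R)) (E : Finset (ι → R))
    (s : R) :
    ‖distanceSum ψ E s‖ ^ 2 ≤
      #E ^ 2 * (Fintype.card R : ℝ) ^ Fintype.card ι * #{z : R | s * z = 0} ^ Fintype.card ι := by
  calc ‖distanceSum ψ E s‖ ^ 2
      ≤ (∑ x ∈ E, ‖∑ y ∈ E, ψ (s * ∑ i, (x i - y i) ^ 2)‖) ^ 2 := by
        gcongr
        exact norm_sum_le _ _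
    _ ≤ #E * ∑ x ∈ E, ‖∑ y ∈ E, ψ (s * ∑ i, (x i - y i) ^ 2)‖ ^ 2 := sq_sum_le_card_mul_sum_sq
    _ ≤ #E * ∑ x : ι → R, ‖∑ y ∈ E, ψ (s * ∑ i, (x i - y i) ^ 2)‖ ^ 2 := by
        gcongr
        exact subset_univ E
    _ ≤ #E * ((Fintype.card R : ℝ) ^ Fintype.card ι * #{p ∈ E ×ˢ E | s • (p.1 - p.2) = 0}) := by
        gcongr
        exact sum_norm_sq_le hψ h2 E s
    _ ≤ #E * ((Fintype.card R : ℝ) ^ Fintype.card ι *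
          (#E * #{z : R | s * z = 0} ^ Fintype.card ι)) := by
        gcongr
        exact_mod_cast card_filter_smul_sub_eq_zero_le E s
    _ = _ := by ring

end Bound

section ZModQuadratic

variable {q : ℕ} [NeZero q] [DecidableEq ι]

theorem norm_distanceSum_stdAddChar_le (hq : Odd q) (hι : 2 ≤ Fintype.card ι)
    (E : Finset (ι → ZMod q)) {s : ZMod q} (hs : s ≠ 0) :
    ‖distanceSum ZMod.stdAddChar E s‖ ≤ #E * q.gcd s.val *
      (q ^ (Fintype.card ι - 1) * (q.minFac : ℝ) ^ (-(((Fintype.card ι : ℝ) - 2) / 2))) := by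
  obtain ⟨m, hm⟩ := Nat.exists_eq_add_of_le' hι
  have hsq := norm_distanceSum_sq_le (ZMod.isPrimitive_stdAddChar q) (ZMod.isUnit_two_of_odd hq) E s
  rw [ZMod.card, hm] at hsq
  rw [hm, show m + 2 - 1 = m + 1 by omega]
  have hann : (#{z : ZMod q | s * z = 0} : ℝ) ≤ q.gcd s.val := by
    exact_mod_cast ZMod.card_filter_mul_eq_zero_le_gcd s
  have hgp : (q.gcd s.val : ℝ) * q.minFac ≤ q := by
    exact_mod_cast ZMod.gcd_val_mul_minFac_le hs
  set p : ℝ := (q.minFac : ℝ)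
  set r : ℝ := p ^ (-((((m + 2 : ℕ) : ℝ) - 2) / 2))
  set g : ℝ := (q.gcd s.val : ℝ)
  have hp : 0 < p := by simp [p, q.minFac_pos]
  have hr : r ^ 2 * p ^ m = 1 := by
    rw [← Real.rpow_natCast r, ← Real.rpow_mul hp.le, ← Real.rpow_natCast p m,
      ← Real.rpow_add hp]
    push_cast
    ring_nf
    exact Real.rpow_zero p
  refine (pow_le_pow_iff_left₀ (norm_nonneg _) (by positivity) two_ne_zero).1 ?_
  calc ‖distanceSum ZMod.stdAddChar E s‖ ^ 2
      ≤ #E ^ 2 * (q : ℝ) ^ (m + 2) * g ^ (m + 2) := by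
        refine hsq.trans ?_
        gcongr
    _ = #E ^ 2 * (q : ℝ) ^ (m + 2) * g ^ 2 * ((g * p) ^ m * r ^ 2) := by
        linear_combination (-(#E ^ 2 * (q : ℝ) ^ (m + 2) * g ^ (m + 2))) * hr
    _ ≤ #E ^ 2 * (q : ℝ) ^ (m + 2) * g ^ 2 * ((q : ℝ) ^ m * r ^ 2) := by gcongr
    _ = (#E * g * ((q : ℝ) ^ (m + 1) * r)) ^ 2 := by ring

theorem sum_norm_distanceSum_stdAddChar_le (hq : Odd q) (hι : 2 ≤ Fintype.card ι)
    (E : Finset (ι → ZMod q)) :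
    ∑ s ∈ univ.erase 0, ‖distanceSum ZMod.stdAddChar E s‖ ≤
      #E * (q.divisors.card * (q : ℝ) ^ Fintype.card ι *
        (q.minFac : ℝ) ^ (-(((Fintype.card ι : ℝ) - 2) / 2))) := by
  set B : ℝ := q ^ (Fintype.card ι - 1) * (q.minFac : ℝ) ^ (-(((Fintype.card ι : ℝ) - 2) / 2))
  have hgcd : (∑ s ∈ univ.erase (0 : ZMod q), q.gcd s.val : ℝ) ≤ q.divisors.card * q := by
    exact_mod_cast (sum_le_sum_of_subset (erase_subset 0 univ)).trans ZMod.sum_gcd_val_le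
  calc ∑ s ∈ univ.erase 0, ‖distanceSum ZMod.stdAddChar E s‖
      ≤ ∑ s ∈ univ.erase (0 : ZMod q), #E * q.gcd s.val * B :=
        sum_le_sum fun s hs => norm_distanceSum_stdAddChar_le hq hι E (ne_of_mem_erase hs)
    _ = #E * B * ∑ s ∈ univ.erase (0 : ZMod q), (q.gcd s.val : ℝ) := by
        rw [← sum_mul, ← mul_sum]
        ring
    _ ≤ #E * B * (q.divisors.card * q) := by gcongr
    _ = _ := by
        rw [← pow_sub_one_mul (by omega : Fintype.card ι ≠ 0) (q : ℝ)]
        ring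

end ZModQuadratic

end DistanceSet

open DistanceSet in
/-- Main theorem: there is an absolute constant `C` such that for every odd `q` with smallest
prime factor `p₁` and every `d > 2`, any `E ⊆ (ℤ/qℤ)^d` with
`|E| ≥ C τ(q) q^d p₁^{−(d−2)/2}` has distance set `Δ(E) = ℤ/qℤ`. -/
theorem stmt_16 :
    ∃ C : ℝ, 0 < C ∧ ∀ q d : ℕ, Odd q → 2 < d →
      ∀ E : Finset (Fin d → ZMod q),
        C * (q.divisors.card : ℝ) * (q : ℝ) ^ (d : ℕ) *
            (q.minFac : ℝ) ^ (-(((d : ℝ) - 2) / 2)) ≤ (E.card : ℝ) →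
        ∀ t : ZMod q, ∃ x ∈ E, ∃ y ∈ E, ∑ i, (x i - y i) ^ 2 = t := by
  refine ⟨2, two_pos, fun q d hq hd E hE t => ?_⟩
  have : NeZero q := ⟨hq.pos.ne'⟩
  set M : ℝ := q.divisors.card * (q : ℝ) ^ d * (q.minFac : ℝ) ^ (-(((d : ℝ) - 2) / 2))
  have hM : 0 < M := by
    have : 0 < q.divisors.card := card_pos.2 ⟨1, Nat.one_mem_divisors.2 hq.pos.ne'⟩
    have := q.minFac_pos
    have := hq.pos
    positivity
  have hlow := card_sq_sub_sum_norm_le (ZMod.isPrimitive_stdAddChar q) E t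
  have herr := sum_norm_distanceSum_stdAddChar_le hq (by simpa using hd.le) E
  simp only [Fintype.card_fin, ZMod.card] at hlow herr
  have h2M : 2 * M ≤ #E := by linarith
  obtain ⟨⟨x, y⟩, hxy⟩ : ({p ∈ E ×ˢ E | ∑ i, (p.1 i - p.2 i) ^ 2 = t} : Finset _).Nonempty := by
    rw [← card_pos, ← Nat.cast_pos (α := ℝ)]
    refine pos_of_mul_pos_right ?_ (Nat.cast_nonneg q)
    nlinarith
  simp only [mem_filter, mem_product] at hxy
  exact ⟨x, hxy.1.1, y, hxy.1.2, hxy.2⟩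
end

section
/- Let q = p^ℓ be an odd prime power and d > 2. There is an absolute constant C such that for any E ⊆ (Z/qZ)^d with |E| ≥ C(ℓ+1) q^{((2ℓ−1)d+2)/(2ℓ)}, the distance set Δ(E) = {Σᵢ(xᵢ−yᵢ)² : x,y ∈ E} equals all of Z/qZ. -/
/-!
If `t` is not a distance of `E`, then `∑ s, ∑ x ∈ E, ∑ y ∈ E, ψ (s * (‖x - y‖² - t)) = 0`, and the
term `s = 0` of this sum is `|E|²`. For `s ≠ 0`, expanding the kernel `z ↦ ψ (s * ‖z‖²)` in
characters and applying Parseval bounds the inner double sum by `|E|` times the largest Fourier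
coefficient of the kernel. That coefficient is a product of `d` Gauss sums, each of modulus at most
`√(q * #{h | s * h = 0})`. In `ℤ/p^ℓ` an element of valuation `j < ℓ` has `p^j` annihilators, and
at most `p^(ℓ-j)` elements have valuation `j`. Summing over `j` gives
`|E| ≤ ℓ * q^(((2ℓ-1)d+2)/(2ℓ))`, so `C = 1` works.
-/

open Finset Matrix

namespace AddChar

variable {A M ι : Type*} [AddCommMonoid A] [CommMonoid M]

lemma map_sum_eq_prod_s17 (ψ : AddChar A M) (s : Finset ι) (f : ι → A) :
    ψ (∑ i ∈ s, f i) = ∏ i ∈ s, ψ (f i) :=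
  map_sum ψ.toAddMonoidHom f s

end AddChar

namespace Distances

variable {R ι : Type*} [CommRing R] [DecidableEq R] [Fintype ι]

def distanceSet (E : Finset (ι → R)) : Finset R :=
  (E ×ˢ E).image fun xy ↦ ∑ i, (xy.1 i - xy.2 i) ^ 2

lemma mem_distanceSet {E : Finset (ι → R)} {t : R} :
    t ∈ distanceSet E ↔ ∃ x ∈ E, ∃ y ∈ E, ∑ i, (x i - y i) ^ 2 = t := by
  simp [distanceSet, and_assoc]

variable [Fintype R] [DecidableEq ι] {ψ : AddChar R ℂ}

lemma sum_apply_dotProduct_eq_ite (hψ : ψ.IsPrimitive) (v : ι → R) :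
    ∑ m : ι → R, ψ (m ⬝ᵥ v) = if v = 0 then (Fintype.card R : ℂ) ^ Fintype.card ι else 0 := by
  simp only [dotProduct, ψ.map_sum_eq_prod_s17]
  rw [← Fintype.prod_sum fun i c ↦ ψ (c * v i)]
  simp only [AddChar.sum_mulShift _ hψ, Nat.cast_ite, Nat.cast_zero]
  rw [prod_ite_zero]
  simp [funext_iff]

lemma card_pow_mul_sum_sum_sub (hψ : ψ.IsPrimitive) (E : Finset (ι → R)) (K : (ι → R) → ℂ) :
    (Fintype.card R : ℂ) ^ Fintype.card ι * ∑ x ∈ E, ∑ y ∈ E, K (x - y) =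
      ∑ m, (‖∑ x ∈ E, ψ (m ⬝ᵥ x)‖ : ℂ) ^ 2 * ∑ z, K z * ψ (-(m ⬝ᵥ z)) := by
  have hexpand : ∀ m : ι → R, (‖∑ x ∈ E, ψ (m ⬝ᵥ x)‖ : ℂ) ^ 2 * ∑ z, K z * ψ (-(m ⬝ᵥ z)) =
      ∑ x ∈ E, ∑ y ∈ E, ∑ z, K z * ψ (m ⬝ᵥ (x - y - z)) := by
    intro m
    rw [← Complex.mul_conj', map_sum, sum_mul_sum, sum_mul]
    refine sum_congr rfl fun x _ ↦ ?_
    rw [sum_mul]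
    refine sum_congr rfl fun y _ ↦ ?_
    rw [mul_sum]
    refine sum_congr rfl fun z _ ↦ ?_
    rw [← AddChar.map_neg_eq_conj, dotProduct_sub, dotProduct_sub, sub_eq_add_neg,
      sub_eq_add_neg, AddChar.map_add_eq_mul, AddChar.map_add_eq_mul]
    ring
  have hdelta : ∀ x y : ι → R, ∑ m : ι → R, ∑ z, K z * ψ (m ⬝ᵥ (x - y - z)) =
      (Fintype.card R : ℂ) ^ Fintype.card ι * K (x - y) := by
    intro x y
    rw [sum_comm]
    simp only [← mul_sum, sum_apply_dotProduct_eq_ite hψ, sub_eq_zero, mul_ite, mul_zero]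
    rw [sum_ite_eq]
    simp [mul_comm]
  simp only [hexpand, mul_sum]
  symm
  rw [sum_comm]
  refine sum_congr rfl fun x _ ↦ ?_
  rw [sum_comm]
  exact sum_congr rfl fun y _ ↦ hdelta x y

lemma sum_norm_sq_eq (hψ : ψ.IsPrimitive) (E : Finset (ι → R)) :
    ∑ m : ι → R, ‖∑ x ∈ E, ψ (m ⬝ᵥ x)‖ ^ 2 = (Fintype.card R : ℝ) ^ Fintype.card ι * #E := by
  have h := card_pow_mul_sum_sum_sub hψ E fun z ↦ if z = 0 then 1 else 0
  simp only [sub_eq_zero, ite_mul, one_mul, zero_mul, sum_ite_eq', sum_ite_eq, mem_univ,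
    if_true, dotProduct_zero, neg_zero, AddChar.map_zero_eq_one, mul_one] at h
  rw [sum_boole, filter_mem_eq_inter, inter_self] at h
  exact_mod_cast h.symm

lemma norm_sum_sum_sub_le (hψ : ψ.IsPrimitive) (E : Finset (ι → R)) (K : (ι → R) → ℂ) {B : ℝ}
    (hB : ∀ m, ‖∑ z, K z * ψ (-(m ⬝ᵥ z))‖ ≤ B) :
    ‖∑ x ∈ E, ∑ y ∈ E, K (x - y)‖ ≤ #E * B := by
  have hN : (0 : ℝ) < (Fintype.card R : ℝ) ^ Fintype.card ι := by positivity
  refine le_of_mul_le_mul_left ?_ hN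
  calc (Fintype.card R : ℝ) ^ Fintype.card ι * ‖∑ x ∈ E, ∑ y ∈ E, K (x - y)‖
      = ‖∑ m, (‖∑ x ∈ E, ψ (m ⬝ᵥ x)‖ : ℂ) ^ 2 * ∑ z, K z * ψ (-(m ⬝ᵥ z))‖ := by
        rw [← card_pow_mul_sum_sum_sub hψ, norm_mul, norm_pow, Complex.norm_natCast]
    _ ≤ ∑ m, ‖∑ x ∈ E, ψ (m ⬝ᵥ x)‖ ^ 2 * B := by
        refine (norm_sum_le _ _).trans (sum_le_sum fun m _ ↦ ?_)
        rw [norm_mul, norm_pow, Complex.norm_real, norm_norm]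
        gcongr
        exact hB m
    _ = (Fintype.card R : ℝ) ^ Fintype.card ι * (#E * B) := by
        rw [← sum_mul, sum_norm_sq_eq hψ, mul_assoc]

lemma norm_sum_quadratic_sq_le (h2 : IsUnit (2 : R)) (hψ : ψ.IsPrimitive) (s b : R) :
    ‖∑ c, ψ (s * c ^ 2 + b * c)‖ ^ 2 ≤ Fintype.card R * #{h | s * h = 0} := by
  set f : R → R := fun c ↦ s * c ^ 2 + b * c
  -- After substituting `c + h` for `c'`, the phase `f (c + h) - f c = f h + c * (2 * s * h)` is
  -- linear in `c`, so summing over `c` leaves only the `h` with `2 * s * h = 0`.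
  have hsq : (‖∑ c, ψ (f c)‖ : ℂ) ^ 2 =
      ∑ h, ψ (f h) * if s * h = 0 then (Fintype.card R : ℂ) else 0 := by
    rw [← Complex.mul_conj', map_sum, sum_mul_sum, sum_comm]
    calc ∑ c, ∑ c', ψ (f c') * (starRingEnd ℂ) (ψ (f c))
        = ∑ c, ∑ h, ψ (f (c + h)) * (starRingEnd ℂ) (ψ (f c)) :=
          sum_congr rfl fun c _ ↦ (Fintype.sum_equiv (Equiv.addLeft c) _ _ fun _ ↦ rfl).symm
      _ = ∑ h, ∑ c, ψ (f h) * ψ (c * (2 * s * h)) := by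
          rw [sum_comm]
          refine sum_congr rfl fun h _ ↦ sum_congr rfl fun c _ ↦ ?_
          rw [← AddChar.map_neg_eq_conj, ← AddChar.map_add_eq_mul, ← AddChar.map_add_eq_mul]
          congr 1
          ring
      _ = ∑ h, ψ (f h) * if s * h = 0 then (Fintype.card R : ℂ) else 0 := by
          simp only [← mul_sum, AddChar.sum_mulShift _ hψ, mul_assoc, h2.mul_right_eq_zero,
            Nat.cast_ite, Nat.cast_zero]
  calc ‖∑ c, ψ (f c)‖ ^ 2 = ‖∑ h, ψ (f h) * if s * h = 0 then (Fintype.card R : ℂ) else 0‖ := by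
        rw [← hsq, ← Complex.ofReal_pow, Complex.norm_real, norm_pow, norm_norm]
    _ ≤ ∑ h, if s * h = 0 then (Fintype.card R : ℝ) else 0 := by
        refine (norm_sum_le _ _).trans (sum_le_sum fun h _ ↦ ?_)
        split_ifs <;> simp
    _ = Fintype.card R * #{h | s * h = 0} := by
        rw [sum_ite, sum_const_zero, add_zero, sum_const, nsmul_eq_mul, mul_comm]

lemma norm_sum_quadraticForm_le (h2 : IsUnit (2 : R)) (hψ : ψ.IsPrimitive) (s : R) (m : ι → R) :
    ‖∑ z : ι → R, ψ (s * ∑ i, z i ^ 2) * ψ (-(m ⬝ᵥ z))‖ ≤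
      √(Fintype.card R * #{h | s * h = 0}) ^ Fintype.card ι := by
  have hprod : ∑ z : ι → R, ψ (s * ∑ i, z i ^ 2) * ψ (-(m ⬝ᵥ z)) =
      ∏ i, ∑ c, ψ (s * c ^ 2 + -m i * c) := by
    rw [Fintype.prod_sum]
    refine sum_congr rfl fun z _ ↦ ?_
    rw [← AddChar.map_add_eq_mul, ← ψ.map_sum_eq_prod_s17, dotProduct, mul_sum, ← sum_neg_distrib,
      ← sum_add_distrib]
    ring_nf
  calc ‖∑ z : ι → R, ψ (s * ∑ i, z i ^ 2) * ψ (-(m ⬝ᵥ z))‖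
      = ∏ i, ‖∑ c, ψ (s * c ^ 2 + -m i * c)‖ := by rw [hprod, norm_prod]
    _ ≤ ∏ _i : ι, √(Fintype.card R * #{h | s * h = 0}) :=
        prod_le_prod (fun _ _ ↦ norm_nonneg _) fun i _ ↦
          Real.le_sqrt_of_sq_le (norm_sum_quadratic_sq_le h2 hψ s _)
    _ = _ := by rw [prod_const, card_univ]

theorem card_le_sum_of_notMem_distanceSet (h2 : IsUnit (2 : R)) (hψ : ψ.IsPrimitive)
    {E : Finset (ι → R)} {t : R} (ht : t ∉ distanceSet E) :
    (#E : ℝ) ≤ ∑ s ∈ univ.erase (0 : R), √(Fintype.card R * #{h | s * h = 0}) ^ Fintype.card ι := by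
  set F : R → ℂ := fun s ↦ ∑ x ∈ E, ∑ y ∈ E, ψ (s * ∑ i, (x - y) i ^ 2)
  have hvanish : ∑ s, ψ (-(s * t)) * F s = 0 := by
    simp only [F, mul_sum, ← AddChar.map_add_eq_mul]
    rw [sum_comm]
    refine sum_eq_zero fun x hx ↦ ?_
    rw [sum_comm]
    refine sum_eq_zero fun y hy ↦ ?_
    have hQ : ∀ s, -(s * t) + ∑ i, s * (x - y) i ^ 2 = s * (∑ i, (x i - y i) ^ 2 - t) :=
      fun s ↦ by rw [← mul_sum]; simp only [Pi.sub_apply]; ring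
    have hne : ∑ i, (x i - y i) ^ 2 ≠ t := fun h ↦ ht (mem_distanceSet.2 ⟨x, hx, y, hy, h⟩)
    simp only [hQ, AddChar.sum_mulShift _ hψ, sub_eq_zero, hne, if_false, Nat.cast_zero]
  have hF0 : F 0 = (#E : ℂ) * #E := by
    simp only [F, zero_mul, AddChar.map_zero_eq_one, sum_const, nsmul_eq_mul, mul_one]
  have hF : ∀ s, ‖F s‖ ≤ #E * √(Fintype.card R * #{h | s * h = 0}) ^ Fintype.card ι :=
    fun s ↦ norm_sum_sum_sub_le hψ E (fun z ↦ ψ (s * ∑ i, z i ^ 2))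
      (norm_sum_quadraticForm_le h2 hψ s)
  obtain hE | hE := E.eq_empty_or_nonempty
  · simp only [hE, card_empty, CharP.cast_eq_zero]
    positivity
  refine le_of_mul_le_mul_left ?_ (by exact_mod_cast hE.card_pos : (0 : ℝ) < #E)
  calc (#E : ℝ) * #E = ‖ψ (-(0 * t)) * F 0‖ := by simp [hF0]
    _ = ‖∑ s ∈ univ.erase (0 : R), ψ (-(s * t)) * F s‖ := by
        rw [eq_neg_of_add_eq_zero_left ((add_sum_erase _ _ (mem_univ 0)).trans hvanish),
          norm_neg]
    _ ≤ ∑ s ∈ univ.erase (0 : R), #E * √(Fintype.card R * #{h | s * h = 0}) ^ Fintype.card ι := by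
        refine (norm_sum_le _ _).trans (sum_le_sum fun s _ ↦ ?_)
        rw [norm_mul, AddChar.norm_apply, one_mul]
        exact hF s
    _ = #E * ∑ s ∈ univ.erase (0 : R), √(Fintype.card R * #{h | s * h = 0}) ^ Fintype.card ι :=
        (mul_sum _ _ _).symm

lemma card_filter_dvd_val_le {n k m : ℕ} [NeZero n] (hkm : k * m = n) :
    #{h : ZMod n | k ∣ h.val} ≤ m := by
  have hk : 0 < k := Nat.pos_of_ne_zero fun hk ↦ NeZero.ne n (by rw [← hkm, hk, zero_mul])
  refine (card_le_card_of_injOn (fun h : ZMod n ↦ h.val / k) (t := range m) ?_ ?_).trans_eq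
    (card_range m)
  · intro h _
    simpa [Nat.div_lt_iff_lt_mul hk, mul_comm m, hkm] using ZMod.val_lt h
  · intro h₁ hh₁ h₂ hh₂ heq
    simp only [coe_filter, Set.mem_ofPred_eq, mem_univ, true_and] at hh₁ hh₂
    exact ZMod.val_injective n <| by
      rw [← Nat.div_mul_cancel hh₁, ← Nat.div_mul_cancel hh₂]
      exact congrArg (· * k) heq

variable {p ℓ : ℕ} [Fact p.Prime]

lemma padicValNat_val_lt {s : ZMod (p ^ ℓ)} (hs : s ≠ 0) : padicValNat p s.val < ℓ := by
  have hp := (Fact.out : p.Prime)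
  have hpos : 0 < s.val := Nat.pos_of_ne_zero ((ZMod.val_ne_zero s).2 hs)
  exact (Nat.pow_lt_pow_iff_right hp.one_lt).mp
    ((Nat.le_of_dvd hpos pow_padicValNat_dvd).trans_lt (ZMod.val_lt s))

lemma card_annihilator_le {s : ZMod (p ^ ℓ)} (hs : s ≠ 0) :
    #{h | s * h = 0} ≤ p ^ padicValNat p s.val := by
  have hp := (Fact.out : p.Prime)
  set j := padicValNat p s.val with hj
  have hjℓ := padicValNat_val_lt hs
  obtain ⟨c, hc⟩ : p ^ j ∣ s.val := pow_padicValNat_dvd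
  have hcop : (p ^ (ℓ - j)).Coprime c := by
    refine Nat.Coprime.pow_left _ ?_
    have := Nat.coprime_ordCompl hp ((ZMod.val_ne_zero s).2 hs)
    rwa [Nat.factorization_def _ hp, ← hj, hc, Nat.mul_div_cancel_left _ (pow_pos hp.pos _)]
      at this
  refine (card_le_card fun h hh ↦ ?_).trans
    (card_filter_dvd_val_le (k := p ^ (ℓ - j)) (by rw [← pow_add, Nat.sub_add_cancel hjℓ.le]))
  simp only [mem_filter, mem_univ, true_and] at hh ⊢
  have hdvd : p ^ j * p ^ (ℓ - j) ∣ p ^ j * (c * h.val) := by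
    rw [← pow_add, Nat.add_sub_cancel' hjℓ.le, ← mul_assoc, ← hc, ← ZMod.natCast_eq_zero_iff,
      Nat.cast_mul, ZMod.natCast_zmod_val, ZMod.natCast_zmod_val, hh]
  exact hcop.dvd_of_dvd_mul_left (Nat.dvd_of_mul_dvd_mul_left (pow_pos hp.pos _) hdvd)

lemma two_mul_sub_add_add_mul_le {ℓ j n : ℕ} (hj : j < ℓ) (hn : 2 ≤ n) :
    2 * (ℓ - j) + (ℓ + j) * n ≤ (2 * ℓ - 1) * n + 2 := by
  obtain ⟨k, rfl⟩ : ∃ k, ℓ = j + k + 1 := ⟨ℓ - j - 1, by omega⟩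
  rw [show j + k + 1 - j = k + 1 by omega, show 2 * (j + k + 1) - 1 = 2 * j + 2 * k + 1 by omega]
  nlinarith

lemma sum_sqrt_mul_card_annihilator_pow_le {n : ℕ} (hn : 2 ≤ n) :
    ∑ s ∈ univ.erase (0 : ZMod (p ^ ℓ)), √((p : ℝ) ^ ℓ * #{h | s * h = 0}) ^ n ≤
      ℓ * √p ^ ((2 * ℓ - 1) * n + 2) := by
  have hp := (Fact.out : p.Prime)
  have hsq : √(p : ℝ) ^ 2 = p := Real.sq_sqrt (Nat.cast_nonneg p)
  have hone : 1 ≤ √(p : ℝ) := Real.one_le_sqrt.2 (by exact_mod_cast hp.one_lt.le)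
  have hterm : ∀ s ∈ univ.erase (0 : ZMod (p ^ ℓ)),
      √((p : ℝ) ^ ℓ * #{h | s * h = 0}) ^ n ≤ √p ^ ((ℓ + padicValNat p s.val) * n) := by
    intro s hs
    rw [pow_mul]
    gcongr
    refine Real.sqrt_le_iff.2 ⟨by positivity, ?_⟩
    rw [← pow_mul, mul_comm _ 2, pow_mul, hsq, pow_add]
    gcongr
    exact_mod_cast card_annihilator_le (ne_of_mem_erase hs)
  have hfiber : ∀ j ∈ range ℓ,
      #{s ∈ univ.erase (0 : ZMod (p ^ ℓ)) | padicValNat p s.val = j} ≤ p ^ (ℓ - j) := by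
    intro j hj
    refine (card_le_card fun s hs ↦ ?_).trans (card_filter_dvd_val_le (k := p ^ j) ?_)
    · rw [mem_filter] at hs ⊢
      exact ⟨mem_univ s, hs.2 ▸ pow_padicValNat_dvd⟩
    · rw [← pow_add, Nat.add_sub_cancel' (mem_range.1 hj).le]
  rw [← sum_fiberwise_of_maps_to fun s hs ↦ mem_range.2 (padicValNat_val_lt (ne_of_mem_erase hs))]
  calc _ ≤ ∑ j ∈ range ℓ, ∑ s ∈ univ.erase (0 : ZMod (p ^ ℓ)) with padicValNat p s.val = j,
          √p ^ ((ℓ + j) * n) := by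
        refine sum_le_sum fun j _ ↦ sum_le_sum fun s hs ↦ ?_
        obtain ⟨hs', rfl⟩ := mem_filter.1 hs
        exact hterm s hs'
    _ ≤ ∑ j ∈ range ℓ, √p ^ ((2 * ℓ - 1) * n + 2) := by
        refine sum_le_sum fun j hj ↦ ?_
        rw [sum_const, nsmul_eq_mul]
        calc _ ≤ ((p ^ (ℓ - j) : ℕ) : ℝ) * √p ^ ((ℓ + j) * n) := by
              gcongr
              exact_mod_cast hfiber j hj
          _ = √p ^ (2 * (ℓ - j) + (ℓ + j) * n) := by
              rw [pow_add, pow_mul √(p : ℝ) 2, hsq, Nat.cast_pow, pow_mul]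
          _ ≤ _ := pow_le_pow_right₀ hone (two_mul_sub_add_add_mul_le (mem_range.1 hj) hn)
    _ = _ := by rw [sum_const, card_range, nsmul_eq_mul]

lemma isUnit_two_of_odd {n : ℕ} (hn : Odd n) : IsUnit (2 : ZMod n) := by
  simpa using (ZMod.isUnit_iff_coprime 2 n).2 (Nat.coprime_two_left.2 hn)

lemma pow_rpow_div_two_mul_eq_sqrt_pow {x : ℝ} (hx : 0 ≤ x) {ℓ : ℕ} (hℓ : ℓ ≠ 0) (k : ℕ) :
    (x ^ ℓ) ^ ((k : ℝ) / (2 * ℓ)) = √x ^ k := by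
  rw [← Real.rpow_natCast x ℓ, ← Real.rpow_mul hx, Real.sqrt_eq_rpow, ← Real.rpow_mul_natCast hx]
  congr 1
  field_simp

end Distances

open Distances in
/-- Corollary: for `q = p^ℓ` an odd prime power and `d > 2`, there is an absolute constant
`C` such that any `E ⊆ (ℤ/qℤ)^d` with `|E| ≥ C(ℓ+1) q^{((2ℓ−1)d+2)/(2ℓ)}` has distance set
all of `ℤ/qℤ`. -/
theorem stmt_17 :
    ∃ C : ℝ, 0 < C ∧ ∀ p ℓ d : ℕ, p.Prime → Odd p → 1 ≤ ℓ → 2 < d →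
      ∀ E : Finset (Fin d → ZMod (p ^ ℓ)),
        C * ((ℓ : ℝ) + 1) *
            ((p : ℝ) ^ ℓ) ^ (((2 * (ℓ : ℝ) - 1) * (d : ℝ) + 2) / (2 * (ℓ : ℝ))) ≤
          (E.card : ℝ) →
        ∀ t : ZMod (p ^ ℓ), ∃ x ∈ E, ∃ y ∈ E, ∑ i, (x i - y i) ^ 2 = t := by
  refine ⟨1, one_pos, fun p ℓ d hp hodd hℓ hd E hE t ↦ ?_⟩
  have : Fact p.Prime := ⟨hp⟩
  rw [← mem_distanceSet]
  by_contra ht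
  have hupper : (#E : ℝ) ≤ ℓ * √p ^ ((2 * ℓ - 1) * d + 2) := by
    have := card_le_sum_of_notMem_distanceSet (isUnit_two_of_odd hodd.pow)
      (ZMod.isPrimitive_stdAddChar _) ht
    rw [ZMod.card, Nat.cast_pow, Fintype.card_fin] at this
    exact this.trans (sum_sqrt_mul_card_annihilator_pow_le hd.le)
  have hexp : (((2 * ℓ - 1) * d + 2 : ℕ) : ℝ) = (2 * (ℓ : ℝ) - 1) * d + 2 := by
    push_cast [Nat.cast_sub (by omega : 1 ≤ 2 * ℓ)]
    ring
  rw [← hexp, pow_rpow_div_two_mul_eq_sqrt_pow (Nat.cast_nonneg p) (by omega)] at hE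
  have hpos : 0 < √(p : ℝ) ^ ((2 * ℓ - 1) * d + 2) :=
    pow_pos (Real.sqrt_pos.2 (by exact_mod_cast hp.pos)) _
  linarith
end
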